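/- arXiv:2410.22001 — 7 statements merged into one kernel-verified Lean document; each statement's English description precedes it below -/
import Mathlib

section
/- Let p be a stochastic choice function rationalizable by an MSC model on a menu M with matrices Q, and suppose the model is not reversible on M with respect to p, i.e. there exist k,l ∈ M with p(k|M)·q_kl(M) ≠ p(l|M)·q_lk(M). Then there exists a positive sign-consistent cycle with respect to p(·|M) on some subset M' ⊆ M, i.e. a cycle all of whose pairs (i,j) satisfy δ_ij(M) > 0. -/
/-!
The net flow `F(u, v) = p(u|M) q_uv(M) - p(v|M) q_vu(M)` is antisymmetric and, since `p(·|M)` is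
stationary for the row-stochastic `Q(M)`, sums to zero out of every vertex. Non-reversibility
makes some flow positive, so the alternatives with a positive outgoing flow form a nonempty set
in which every vertex has a positive flow to another one of them; following such edges inside the
finite menu closes a cycle. Along an edge `(i, j)`, with `a = q_ij({i,j})`, `b = q_ji({i,j})`,
stationarity on `{i, j}` and TR-IIA give
  `(a + b) δ_ij(M) = a p(i|M) - b p(j|M)`,
  `(a + b) F(i, j) = (q_ij(M) + q_ji(M)) (a p(i|M) - b p(j|M))`,
and `a + b > 0` by (A2), so `F(i, j) > 0` forces `δ_ij(M) > 0`.
-/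

open Finset

variable {X : Type*} [DecidableEq X]

/-- The menus relevant to an MSC model on `M`: `M` itself and the two-element subsets of `M`. -/
def RelMenu (M N : Finset X) : Prop := N = M ∨ (N ⊆ M ∧ N.card = 2)

/-- `Q` is row-stochastic on `N`: nonnegative entries, rows summing to 1. -/
def RowStochOn (N : Finset X) (Q : X → X → ℝ) : Prop :=
  (∀ i ∈ N, ∀ j ∈ N, 0 ≤ Q i j) ∧ ∀ i ∈ N, ∑ j ∈ N, Q i j = 1

/-- The axioms of an MSC model on the menu `M`: row-stochasticity on relevant menus,
(A1) prolonged consideration, (A2) pairwise comparability on binary sets, (A3) TR-IIA. -/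
def IsMSC (M : Finset X) (q : Finset X → X → X → ℝ) : Prop :=
  (∀ N, RelMenu M N → RowStochOn N (q N)) ∧
  (∀ N, RelMenu M N → ∀ i ∈ N, 0 < q N i i) ∧
  (∀ i ∈ M, ∀ j ∈ M, i ≠ j → q {i, j} i j = 0 → 0 < q {i, j} j i) ∧
  (∀ N, RelMenu M N → ∀ i ∈ N, ∀ j ∈ N, i ≠ j →
    q {i, j} i j * q N j i = q {i, j} j i * q N i j)

/-- `p` is a stochastic choice function. -/
def IsSCF (p : Finset X → X → ℝ) : Prop :=
  ∀ N : Finset X, N.Nonempty →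
    (∀ i, 0 ≤ p N i) ∧ (∀ i, i ∉ N → p N i = 0) ∧ ∑ i ∈ N, p N i = 1

/-- `σ` is a stationary (row) vector of `Q` on `N`, i.e. `σ (I - Q) = 0` on `N`. -/
def StationaryOn (N : Finset X) (Q : X → X → ℝ) (σ : X → ℝ) : Prop :=
  ∀ j ∈ N, ∑ i ∈ N, σ i * Q i j = σ j

/-- The MSC model `q` rationalizes `p` on the menu `M`. -/
def Rationalizes (M : Finset X) (q : Finset X → X → X → ℝ) (p : Finset X → X → ℝ) : Prop :=
  IsMSC M q ∧ ∀ N, RelMenu M N → StationaryOn N (q N) (p N)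

/-- The weighted difference in choice probabilities `δ_ij(M)`. -/
def delta (p : Finset X → X → ℝ) (M : Finset X) (i j : X) : ℝ :=
  p M i * p {i, j} j - p {i, j} i * p M j

/-- The set of ordered pairs of consecutive elements (with wrap-around) of a list. -/
def cyclePairs (c : List X) : List (X × X) := c.zip (c.rotate 1)

/-- `c` is a cycle of distinct alternatives lying in (a subset of) `M`. -/
def IsCycleIn (M : Finset X) (c : List X) : Prop :=
  c.Nodup ∧ 2 ≤ c.length ∧ ∀ x ∈ c, x ∈ M

/-- All pairs of the cycle have strictly positive `δ`. -/
def PosConsistent (p : Finset X → X → ℝ) (M : Finset X) (c : List X) : Prop :=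
  ∀ pr ∈ cyclePairs c, 0 < delta p M pr.1 pr.2

/-- All pairs of the cycle have strictly negative `δ`. -/
def NegConsistent (p : Finset X → X → ℝ) (M : Finset X) (c : List X) : Prop :=
  ∀ pr ∈ cyclePairs c, delta p M pr.1 pr.2 < 0

/-- `p(·|M)` is bounded in a cycle over the pair `(i, j)`. -/
def BoundedInCycle (p : Finset X → X → ℝ) (M : Finset X) (i j : X) : Prop :=
  delta p M i j = 0 ∨
    ∃ c : List X, IsCycleIn M c ∧ (i, j) ∈ cyclePairs c ∧
      (PosConsistent p M c ∨ NegConsistent p M c)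

section Cycles

variable {α β : Type*}

theorem cyclePairs_map (g : α → β) (c : List α) :
    cyclePairs (c.map g) = (cyclePairs c).map (Prod.map g g) := by
  rw [cyclePairs, cyclePairs, ← List.map_rotate, List.zip_map]

theorem mem_of_mem_cyclePairs {c : List α} {a b : α} (h : (a, b) ∈ cyclePairs c) :
    a ∈ c ∧ b ∈ c := by
  obtain ⟨ha, hb⟩ := List.of_mem_zip h
  exact ⟨ha, List.mem_rotate.1 hb⟩

theorem IsCycleIn.mono {S T : Finset α} (hST : S ⊆ T) {c : List α} (hc : IsCycleIn S c) :
    IsCycleIn T c :=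
  ⟨hc.1, hc.2.1, fun x hx => hST (hc.2.2 x hx)⟩

open Function

theorem Function.exists_iterate_mem_periodicPts [Finite α] (f : α → α) (x : α) :
    ∃ n, f^[n] x ∈ periodicPts f := by
  obtain ⟨m, n, hmn, heq⟩ := Finite.exists_ne_map_eq_of_infinite (f^[·] x)
  wlog hlt : m < n generalizing m n
  · exact this n m hmn.symm heq.symm (by omega)
  refine ⟨m, mk_mem_periodicPts (n := n - m) (by omega) ?_⟩
  rw [IsPeriodicPt, IsFixedPt, ← iterate_add_apply, Nat.sub_add_cancel hlt.le]
  exact heq.symm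

theorem exists_iterate_pair_of_mem_cyclePairs {f : α → α} {x : α} {pr : α × α}
    (h : pr ∈ cyclePairs ((List.range (minimalPeriod f x)).map (f^[·] x))) :
    ∃ n, pr = (f^[n] x, f^[n + 1] x) := by
  obtain ⟨i, hi, rfl⟩ := List.getElem_of_mem h
  exact ⟨i, by simp [cyclePairs, List.getElem_rotate, iterate_mod_minimalPeriod_eq]⟩

theorem exists_cycle_of_forall_exists_rel [Finite α] [Nonempty α] {r : α → α → Prop}
    (hirr : ∀ a, ¬ r a a) (h : ∀ a, ∃ b, r a b) :
    ∃ c : List α, c.Nodup ∧ 2 ≤ c.length ∧ ∀ pr ∈ cyclePairs c, r pr.1 pr.2 := by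
  choose f hf using h
  obtain ⟨n, hx⟩ := exists_iterate_mem_periodicPts f (Classical.arbitrary α)
  set x := f^[n] (Classical.arbitrary α)
  have hfx : ¬ IsFixedPt f x := fun hfix => hirr x (by simpa [hfix.eq] using hf x)
  refine ⟨(List.range (minimalPeriod f x)).map (f^[·] x), ?_, ?_, ?_⟩
  · exact List.nodup_map_iff_inj_on List.nodup_range |>.2 fun m hm n hn =>
      (iterate_eq_iterate_iff_of_lt_minimalPeriod (List.mem_range.1 hm) (List.mem_range.1 hn)).1
  · have := minimalPeriod_pos_of_mem_periodicPts hx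
    have := minimalPeriod_eq_one_iff_isFixedPt.not.2 hfx
    simp only [List.length_map, List.length_range]
    omega
  · intro pr hpr
    obtain ⟨k, rfl⟩ := exists_iterate_pair_of_mem_cyclePairs hpr
    rw [iterate_succ_apply']
    exact hf _

theorem Finset.exists_isCycleIn_of_forall_exists_rel [DecidableEq α] {S : Finset α}
    (hS : S.Nonempty) {r : α → α → Prop} (hirr : ∀ a, ¬ r a a)
    (h : ∀ a ∈ S, ∃ b ∈ S, r a b) :
    ∃ c : List α, IsCycleIn S c ∧ ∀ pr ∈ cyclePairs c, r pr.1 pr.2 := by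
  have : Nonempty S := hS.coe_sort
  obtain ⟨c, hnodup, hlen, hc⟩ := exists_cycle_of_forall_exists_rel (r := fun a b : S => r a b)
    (fun a => hirr a) fun a => by simpa using h a a.2
  refine ⟨c.map (↑), ⟨hnodup.map Subtype.val_injective, by simpa using hlen, ?_⟩, ?_⟩
  · intro x hx
    obtain ⟨y, -, rfl⟩ := List.mem_map.1 hx
    exact y.2
  · intro pr hpr
    rw [cyclePairs_map] at hpr
    obtain ⟨pr', hpr', rfl⟩ := List.mem_map.1 hpr
    exact hc pr' hpr'

end Cycles

section NetFlow

variable {α : Type*} (σ : α → ℝ) (Q : α → α → ℝ)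

def netFlow (u v : α) : ℝ := σ u * Q u v - σ v * Q v u

variable {σ Q}

@[simp]
theorem netFlow_self (u : α) : netFlow σ Q u u = 0 :=
  sub_self _

theorem netFlow_swap (u v : α) : netFlow σ Q v u = -netFlow σ Q u v :=
  (neg_sub _ _).symm

theorem sum_netFlow_eq_zero {N : Finset α} (hQ : ∀ i ∈ N, ∑ j ∈ N, Q i j = 1)
    (hσ : StationaryOn N Q σ) {v : α} (hv : v ∈ N) : ∑ w ∈ N, netFlow σ Q v w = 0 := by
  simp only [netFlow]
  rw [Finset.sum_sub_distrib, ← Finset.mul_sum, hQ v hv, hσ v hv, mul_one, sub_self]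

theorem exists_netFlow_pos_of_netFlow_pos {N : Finset α} (hQ : ∀ i ∈ N, ∑ j ∈ N, Q i j = 1)
    (hσ : StationaryOn N Q σ) {u v : α} (hu : u ∈ N) (hv : v ∈ N)
    (h : 0 < netFlow σ Q u v) : ∃ w ∈ N, 0 < netFlow σ Q v w := by
  by_contra! hle
  have hlt : ∑ w ∈ N, netFlow σ Q v w < 0 :=
    Finset.sum_neg' hle ⟨u, hu, by rw [netFlow_swap]; linarith⟩
  exact hlt.ne (sum_netFlow_eq_zero hQ hσ hv)

end NetFlow

theorem StationaryOn.mul_eq_mul_of_pair {α : Type*} [DecidableEq α] {Q : α → α → ℝ}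
    {σ : α → ℝ} {i j : α} (hij : i ≠ j) (hQ : Q j i + Q j j = 1)
    (hσ : StationaryOn {i, j} Q σ) : σ i * Q i j = σ j * Q j i := by
  have := hσ j (by simp)
  rw [Finset.sum_pair hij] at this
  linear_combination this - σ j * hQ

theorem delta_pos_of_netFlow_pos {M : Finset X} {p : Finset X → X → ℝ} (hp : IsSCF p)
    {q : Finset X → X → X → ℝ} (hrat : Rationalizes M q p) {i j : X} (hi : i ∈ M)
    (hj : j ∈ M) (h : 0 < netFlow (p M) (q M) i j) : 0 < delta p M i j := by
  have hij : i ≠ j := by rintro rfl; simp at h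
  have hpair : RelMenu M {i, j} :=
    Or.inr ⟨Finset.insert_subset hi (Finset.singleton_subset_iff.2 hj), Finset.card_pair hij⟩
  obtain ⟨⟨hstoch, -, hcomp, htr⟩, hstat⟩ := hrat
  set a := q {i, j} i j
  set b := q {i, j} j i
  have ha : 0 ≤ a := (hstoch _ hpair).1 i (by simp) j (by simp)
  have hab : 0 < a + b := by
    rcases ha.eq_or_lt with ha0 | ha0
    · linarith [hcomp i hi j hj hij ha0.symm]
    · linarith [(hstoch _ hpair).1 j (by simp) i (by simp)]
  have hbal : p {i, j} i * a = p {i, j} j * b := by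
    refine StationaryOn.mul_eq_mul_of_pair hij ?_ (hstat _ hpair)
    simpa [Finset.sum_pair hij] using (hstoch _ hpair).2 j (by simp)
  have hsum : p {i, j} i + p {i, j} j = 1 := by
    rw [← Finset.sum_pair hij]
    exact (hp _ (Finset.insert_nonempty _ _)).2.2
  have hdelta : (a + b) * delta p M i j = a * p M i - b * p M j := by
    unfold delta
    linear_combination (-(p M i + p M j)) * hbal + (a * p M i - b * p M j) * hsum
  have hflow : (a + b) * netFlow (p M) (q M) i j
      = (q M i j + q M j i) * (a * p M i - b * p M j) := by
    unfold netFlow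
    linear_combination (-(p M i + p M j)) * htr M (Or.inl rfl) i hi j hj hij
  have hq : 0 ≤ q M i j + q M j i :=
    add_nonneg ((hstoch M (Or.inl rfl)).1 i hi j hj) ((hstoch M (Or.inl rfl)).1 j hj i hi)
  refine pos_of_mul_pos_right (hdelta ▸ ?_) hab.le
  exact pos_of_mul_pos_right (hflow ▸ mul_pos hab h) hq

theorem stmt2_general (M : Finset X)
    (p : Finset X → X → ℝ) (hp : IsSCF p)
    (q : Finset X → X → X → ℝ) (hrat : Rationalizes M q p)
    (hnrev : ∃ k ∈ M, ∃ l ∈ M, p M k * q M k l ≠ p M l * q M l k) :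
    ∃ c : List X, IsCycleIn M c ∧ PosConsistent p M c := by
  obtain ⟨k, hk, l, hl, hne⟩ := hnrev
  have hrow := (hrat.1.1 M (Or.inl rfl)).2
  have hstat := hrat.2 M (Or.inl rfl)
  set S := M.filter fun v => ∃ w ∈ M, 0 < netFlow (p M) (q M) v w
  have hSM : S ⊆ M := Finset.filter_subset _ _
  have hS : S.Nonempty := by
    rcases (sub_ne_zero.2 hne).lt_or_gt with hlt | hgt
    · exact ⟨l, Finset.mem_filter.2 ⟨hl, k, hk, by rw [netFlow_swap]; exact neg_pos.2 hlt⟩⟩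
    · exact ⟨k, Finset.mem_filter.2 ⟨hk, l, hl, hgt⟩⟩
  have hsucc : ∀ v ∈ S, ∃ w ∈ S, 0 < netFlow (p M) (q M) v w := by
    intro v hv
    obtain ⟨hvM, w, hwM, hvw⟩ := Finset.mem_filter.1 hv
    exact ⟨w, Finset.mem_filter.2
      ⟨hwM, exists_netFlow_pos_of_netFlow_pos hrow hstat hvM hwM hvw⟩, hvw⟩
  obtain ⟨c, hcS, hc⟩ :=
    Finset.exists_isCycleIn_of_forall_exists_rel hS (by simp) hsucc
  have hcM := hcS.mono hSM
  refine ⟨c, hcM, fun ⟨a, b⟩ hab => ?_⟩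
  obtain ⟨ha, hb⟩ := mem_of_mem_cyclePairs hab
  exact delta_pos_of_netFlow_pos hp hrat (hcM.2.2 a ha) (hcM.2.2 b hb) (hc _ hab)

/-- If `p` is rationalizable by an MSC model on `M` that is not reversible on `M`
(detailed balance `p(k|M)q_kl(M) = p(l|M)q_lk(M)` fails for some pair), then there is a
positive sign-consistent cycle on some subset of `M` with respect to `p(·|M)`. -/
theorem stmt2 (M : Finset X) (hM : M.Nonempty)
    (p : Finset X → X → ℝ) (hp : IsSCF p)
    (q : Finset X → X → X → ℝ) (hrat : Rationalizes M q p)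
    (hnrev : ∃ k ∈ M, ∃ l ∈ M, p M k * q M k l ≠ p M l * q M l k) :
    ∃ c : List X, IsCycleIn M c ∧ PosConsistent p M c :=
  stmt2_general M p hp q hrat hnrev
end

section
/- If a stochastic choice function p is rationalizable on a menu M by an MSC model that is fully comparable on M and reversible on M with respect to p, then p is positive on M (p(i|M) > 0 for all i ∈ M) and satisfies IIA on M (p(i|M)·p(j|{i,j}) = p(j|M)·p(i|{i,j}) for all i,j ∈ M). -/
open Finset

variable {X : Type*} [DecidableEq X]

/-- If `p` is rationalizable on `M` by an MSC model that is fully comparable on `M` and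
reversible on `M` w.r.t. `p`, then `p` is positive on `M` and satisfies IIA on `M`. -/
theorem stmt10 (M : Finset X) (hM : M.Nonempty)
    (p : Finset X → X → ℝ) (hp : IsSCF p)
    (q : Finset X → X → X → ℝ) (hrat : Rationalizes M q p)
    (hfc : ∀ i ∈ M, ∀ j ∈ M, i ≠ j → 0 < q M i j)
    (hrev : ∀ i ∈ M, ∀ j ∈ M, p M i * q M i j = p M j * q M j i) :
    (∀ i ∈ M, 0 < p M i) ∧
    (∀ i ∈ M, ∀ j ∈ M, p M i * p {i, j} j = p M j * p {i, j} i) := by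
  obtain ⟨⟨hrow, hA1, hA2, hA3⟩, hstat⟩ := hrat
  obtain ⟨hpnn, -, hpsum⟩ := hp M hM
  have hpos : ∀ i ∈ M, 0 < p M i := by
    intro i hi
    rcases (hpnn i).lt_or_eq with h | h
    · exact h
    · exfalso
      have hall : ∀ j ∈ M, p M j = 0 := by
        intro j hj
        by_cases hij : j = i
        · rw [hij, ← h]
        · have hq := hfc j hj i hi hij
          have hr := hrev j hj i hi
          rw [← h, zero_mul] at hr
          rcases mul_eq_zero.mp hr with h0 | h0
          · exact h0
          · exact absurd h0 hq.ne'
      rw [Finset.sum_eq_zero hall] at hpsum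
      norm_num at hpsum
  refine ⟨hpos, ?_⟩
  intro i hi j hj
  by_cases hij : i = j
  · subst hij; rfl
  · have hiM := hpos i hi
    have hjM := hpos j hj
    have hsub : ({i, j} : Finset X) ⊆ M :=
      Finset.insert_subset hi (Finset.singleton_subset_iff.mpr hj)
    have hrel : RelMenu M {i, j} := Or.inr ⟨hsub, Finset.card_pair hij⟩
    have himem : i ∈ ({i, j} : Finset X) := Finset.mem_insert_self i {j}
    have hjmem : j ∈ ({i, j} : Finset X) :=
      Finset.mem_insert_of_mem (Finset.mem_singleton_self j)
    have hstatj := hstat {i, j} hrel j hjmem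
    rw [Finset.sum_pair hij] at hstatj
    have hrowsum := (hrow {i, j} hrel).2 j hjmem
    rw [Finset.sum_pair hij] at hrowsum
    -- binary detailed balance
    have hdb : p {i, j} i * q {i, j} i j = p {i, j} j * q {i, j} j i := by
      linear_combination hstatj - p {i, j} j * hrowsum
    have hv : 0 < q M j i := hfc j hj i hi (Ne.symm hij)
    have hA3' := hA3 M (Or.inl rfl) i hi j hj hij
    have hrev' := hrev i hi j hj
    have key : p M i * q {i, j} i j * q M j i = p M j * q {i, j} j i * q M j i := by
      calc p M i * q {i, j} i j * q M j i = p M i * (q {i, j} i j * q M j i) := by ring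
        _ = p M i * (q {i, j} j i * q M i j) := by rw [hA3']
        _ = q {i, j} j i * (p M i * q M i j) := by ring
        _ = q {i, j} j i * (p M j * q M j i) := by rw [hrev']
        _ = p M j * q {i, j} j i * q M j i := by ring
    have hab : p M i * q {i, j} i j = p M j * q {i, j} j i :=
      mul_right_cancel₀ hv.ne' key
    have hβ : 0 < q {i, j} j i := by
      rcases ((hrow {i, j} hrel).1 j hjmem i himem).lt_or_eq with h | h
      · exact h
      · exfalso
        rw [← h, mul_zero] at hab
        have hα : q {i, j} i j = 0 := by
          rcases mul_eq_zero.mp hab with h0 | h0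
          · exact absurd h0 hiM.ne'
          · exact h0
        exact (hA2 i hi j hj hij hα).ne' h.symm
    have final : p M i * p {i, j} j * q {i, j} j i = p M j * p {i, j} i * q {i, j} j i := by
      calc p M i * p {i, j} j * q {i, j} j i = p M i * (p {i, j} j * q {i, j} j i) := by ring
        _ = p M i * (p {i, j} i * q {i, j} i j) := by rw [hdb]
        _ = p {i, j} i * (p M i * q {i, j} i j) := by ring
        _ = p {i, j} i * (p M j * q {i, j} j i) := by rw [hab]
        _ = p M j * p {i, j} i * q {i, j} j i := by ring
    exact mul_right_cancel₀ hβ.ne' final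
end

section
/- Let p be a stochastic choice function on a menu M and its two-element subsets such that p is positive on M (p(i|M) > 0 for all i ∈ M) and satisfies IIA on M (p(i|M)·p(j|{i,j}) = p(j|M)·p(i|{i,j}) for all i,j ∈ M). Then p is rationalizable on M by an MSC model that is fully comparable on M and reversible on M with respect to p. -/
open Finset

variable {X : Type*} [DecidableEq X]

/-- If `p` is positive on `M` and satisfies IIA on `M`, then `p` is rationalizable on `M`
by an MSC model that is fully comparable on `M` and reversible on `M` w.r.t. `p`. -/
theorem stmt11 (M : Finset X) (hM : M.Nonempty)
    (p : Finset X → X → ℝ) (hp : IsSCF p)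
    (hpos : ∀ i ∈ M, 0 < p M i)
    (hiia : ∀ i ∈ M, ∀ j ∈ M, p M i * p {i, j} j = p M j * p {i, j} i) :
    ∃ q : Finset X → X → X → ℝ, Rationalizes M q p ∧
      (∀ i ∈ M, ∀ j ∈ M, i ≠ j → 0 < q M i j) ∧
      (∀ i ∈ M, ∀ j ∈ M, p M i * q M i j = p M j * q M j i) := by
  classical
  set q : Finset X → X → X → ℝ :=
    fun N i j => p N j / 2 + if i = j then 1/2 else 0 with hq
  have hbasic : ∀ N : Finset X, RelMenu M N →
      (∀ i, 0 ≤ p N i) ∧ ∑ i ∈ N, p N i = 1 := by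
    intro N hN
    have hne : N.Nonempty := by
      rcases hN with rfl | ⟨hsub, hcard⟩
      · exact hM
      · exact Finset.card_pos.mp (by omega)
    obtain ⟨h1, h2, h3⟩ := hp N hne
    exact ⟨h1, h3⟩
  refine ⟨q, ⟨⟨?_, ?_, ?_, ?_⟩, ?_⟩, ?_, ?_⟩
  · -- row stochastic
    intro N hN
    obtain ⟨hnn, hsum⟩ := hbasic N hN
    constructor
    · intro i hi j hj
      have := hnn j
      simp only [hq]
      split <;> linarith
    · intro i hi
      simp only [hq]
      rw [Finset.sum_add_distrib, ← Finset.sum_div, hsum,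
        Finset.sum_ite_eq N i (fun _ => (1:ℝ)/2)]
      simp [hi]
      norm_num
  · -- A1
    intro N hN i hi
    have := (hbasic N hN).1 i
    simp only [hq]
    norm_num
    linarith
  · -- A2
    intro i hi j hj hij h0
    have hrel : RelMenu M ({i, j} : Finset X) :=
      Or.inr ⟨Finset.insert_subset hi (Finset.singleton_subset_iff.2 hj),
        Finset.card_pair hij⟩
    obtain ⟨hnn, hsum⟩ := hbasic _ hrel
    rw [Finset.sum_pair hij] at hsum
    have hj0 : p {i, j} j = 0 := by
      simp only [hq, if_neg hij] at h0
      linarith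
    simp only [hq, if_neg (Ne.symm hij)]
    linarith
  · -- A3
    intro N hN i hi j hj hij
    rcases hN with rfl | ⟨hsub, hcard⟩
    · have h := hiia i hi j hj
      simp only [hq, if_neg hij, if_neg (Ne.symm hij)]
      ring_nf
      nlinarith [h]
    · have hNeq : ({i, j} : Finset X) = N := by
        apply Finset.eq_of_subset_of_card_le
          (Finset.insert_subset hi (Finset.singleton_subset_iff.2 hj))
        rw [hcard, Finset.card_pair hij]
      rw [hNeq]
      ring
  · -- stationarity
    intro N hN j hj
    obtain ⟨hnn, hsum⟩ := hbasic N hN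
    simp only [hq, mul_add, mul_ite, mul_zero]
    rw [Finset.sum_add_distrib, Finset.sum_ite_eq' N j (fun i => p N i * (1/2))]
    have : ∑ i ∈ N, p N i * (p N j / 2) = p N j / 2 := by
      rw [← Finset.sum_mul, hsum, one_mul]
    rw [this]
    simp [hj]
    ring
  · -- fully comparable
    intro i hi j hj hij
    have := hpos j hj
    simp only [hq, if_neg hij]
    linarith
  · -- reversible
    intro i hi j hj
    by_cases h : i = j
    · rw [h]
    · simp only [hq, if_neg h, if_neg (Ne.symm h)]
      ring
end

section
/- Let p be a stochastic choice function rationalizable by an MSC model on a menu M with matrices Q. Then for all i,j ∈ M with 0 < p(i|{i,j}) < 1 it holds that δ_ij(M)·q_ij(M)/p(j|{i,j}) = − δ_ji(M)·q_ji(M)/p(i|{i,j}). -/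
open Finset

variable {X : Type*} [DecidableEq X]

/-- Lemma 1 of the paper: for a stochastic choice function `p` rationalizable by an MSC
model on `M`, for all `i, j ∈ M` with `0 < p(i|{i,j}) < 1`,
`δ_ij(M)·q_ij(M)/p(j|{i,j}) = −δ_ji(M)·q_ji(M)/p(i|{i,j})`. -/
theorem stmt16 (M : Finset X) (hM : M.Nonempty)
    (p : Finset X → X → ℝ) (hp : IsSCF p)
    (q : Finset X → X → X → ℝ) (hrat : Rationalizes M q p) :
    ∀ i ∈ M, ∀ j ∈ M, 0 < p {i, j} i → p {i, j} i < 1 →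
      delta p M i j * q M i j / p {i, j} j
        = -(delta p M j i * q M j i / p {i, j} i) := by
  intro i hi j hj h1 h2
  have hij : i ≠ j := by
    rintro rfl
    have h := (hp {i} (singleton_nonempty i)).2.2
    rw [Finset.sum_singleton] at h
    have : ({i, i} : Finset X) = {i} := by simp
    rw [this] at h2
    linarith
  have hmi : i ∈ ({i, j} : Finset X) := by simp
  have hmj : j ∈ ({i, j} : Finset X) := by simp
  have hpairM : ({i, j} : Finset X) ⊆ M := by
    intro x hx; simp at hx; rcases hx with rfl | rfl <;> assumption
  have relpair : RelMenu M {i, j} := Or.inr ⟨hpairM, Finset.card_pair hij⟩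
  have relM : RelMenu M M := Or.inl rfl
  obtain ⟨hMSC, hstat⟩ := hrat
  obtain ⟨hRS, hA1, hA2, hA3⟩ := hMSC
  -- sum of p over pair is 1
  have hsum : p {i, j} i + p {i, j} j = 1 := by
    have h := (hp {i, j} ⟨i, hmi⟩).2.2
    rwa [Finset.sum_pair hij] at h
  have hpj : 0 < p {i, j} j := by linarith
  -- stationarity on pair at i
  have hst : p {i, j} i * q {i, j} i i + p {i, j} j * q {i, j} j i = p {i, j} i := by
    have h := hstat {i, j} relpair i hmi
    rwa [Finset.sum_pair hij] at h
  -- row stochasticity at i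
  have hrow : q {i, j} i i + q {i, j} i j = 1 := by
    have h := (hRS {i, j} relpair).2 i hmi
    rwa [Finset.sum_pair hij] at h
  -- binary detailed balance
  have hdb : p {i, j} i * q {i, j} i j = p {i, j} j * q {i, j} j i := by nlinarith
  -- q {i,j} j i > 0
  have hqji : 0 < q {i, j} j i := by
    rcases eq_or_lt_of_le ((hRS {i, j} relpair).1 j hmj i hmi) with h | h
    · -- q j i = 0, then q i j = 0 from detailed balance, then A2 gives 0 < q j i
      have hij0 : q {i, j} i j = 0 := by
        have := hdb
        rw [← h] at this
        have : p {i, j} i * q {i, j} i j = 0 := by linarith [hdb, mul_comm (p {i,j} j) (q {i,j} j i)]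
        rcases mul_eq_zero.mp this with h' | h'
        · linarith
        · exact h'
      have := hA2 i (hpairM hmi) j (hpairM hmj) hij hij0
      linarith
    · exact h
  -- TR-IIA on M
  have htr : q {i, j} i j * q M j i = q {i, j} j i * q M i j :=
    hA3 M relM i hi j hj hij
  -- key identity
  have key : p {i, j} i * q M i j = p {i, j} j * q M j i := by
    have h1' : p {i, j} i * (q {i, j} j i * q M i j) = p {i, j} j * (q {i, j} j i * q M j i) := by
      calc p {i, j} i * (q {i, j} j i * q M i j)
          = p {i, j} i * (q {i, j} i j * q M j i) := by rw [htr]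
        _ = (p {i, j} i * q {i, j} i j) * q M j i := by ring
        _ = (p {i, j} j * q {i, j} j i) * q M j i := by rw [hdb]
        _ = p {i, j} j * (q {i, j} j i * q M j i) := by ring
    exact mul_left_cancel₀ (ne_of_gt hqji) (by linear_combination h1')
  -- delta antisymmetry
  have hpc : ({j, i} : Finset X) = {i, j} := Finset.pair_comm j i
  have hdelta : delta p M j i = -delta p M i j := by
    unfold delta
    rw [hpc]; ring
  rw [hdelta]
  have hpi' : p {i, j} i ≠ 0 := ne_of_gt h1
  have hpj' : p {i, j} j ≠ 0 := ne_of_gt hpj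
  field_simp
  linear_combination (delta p M i j) * key
end

section
/- Let Q(N), for N = M and every two-element subset of M, be matrices forming an MSC model on the menu M, and let p be a stochastic choice function such that p(·|{i,j}) is a stationary distribution of Q({i,j}) for every two-element subset {i,j} ⊆ M. Then p(·|M) is a stationary distribution of Q(M) if and only if for every j ∈ M: Σ_{i ∈ M\{j} with q_ji(M) > 0} δ_ji(M)·q_ji(M)/p(i|{i,j}) − Σ_{i ∈ M\{j} with q_ji(M) = 0 and q_ji({i,j}) = 0} δ_ij(M)·q_ij(M)/p(j|{i,j}) = 0. (Under the hypotheses, q_ji(M) > 0 implies p(i|{i,j}) > 0, and q_ji({i,j}) = 0 implies p(j|{i,j}) = 1, so every term is well defined.) -/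
open Finset

variable {X : Type*} [DecidableEq X]

private lemma pair_facts {X : Type*} [DecidableEq X] {M : Finset X}
    {q : Finset X → X → X → ℝ} {p : Finset X → X → ℝ}
    (hmsc : IsMSC M q) (hp : IsSCF p)
    (hpair : ∀ N : Finset X, N ⊆ M → N.card = 2 → StationaryOn N (q N) (p N))
    {i j : X} (hi : i ∈ M) (hj : j ∈ M) (hij : i ≠ j) :
    p {i, j} i * q {i, j} i j = p {i, j} j * q {i, j} j i ∧
    p {i, j} i + p {i, j} j = 1 ∧ 0 ≤ p {i, j} i ∧ 0 ≤ p {i, j} j := by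
  obtain ⟨hRS, hA1, hA2, hA3⟩ := hmsc
  have hsub : ({i, j} : Finset X) ⊆ M := by
    intro x hx
    rcases Finset.mem_insert.mp hx with h | h
    · exact h ▸ hi
    · exact (Finset.mem_singleton.mp h) ▸ hj
  have hcard : ({i, j} : Finset X).card = 2 := Finset.card_pair hij
  have hrel : RelMenu M {i, j} := Or.inr ⟨hsub, hcard⟩
  have hiN : i ∈ ({i, j} : Finset X) := Finset.mem_insert_self i {j}
  have hjN : j ∈ ({i, j} : Finset X) :=
    Finset.mem_insert_of_mem (Finset.mem_singleton_self j)
  have hrowj : q {i, j} j i + q {i, j} j j = 1 := by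
    have h := (hRS _ hrel).2 j hjN
    rwa [Finset.sum_pair hij] at h
  have hstat := hpair _ hsub hcard j hjN
  rw [Finset.sum_pair hij] at hstat
  have hpN := hp {i, j} ⟨i, hiN⟩
  have hsum : p {i, j} i + p {i, j} j = 1 := by
    have h := hpN.2.2
    rwa [Finset.sum_pair hij] at h
  exact ⟨by linear_combination hstat - p {i, j} j * hrowj, hsum, hpN.1 i, hpN.1 j⟩


open scoped Classical in
/-- Lemma 3 of the paper: given an MSC model on `M` and a stochastic choice function `p`
that is stationary for `Q({i,j})` on every two-element subset `{i,j} ⊆ M`, `p(·|M)` is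
stationary for `Q(M)` if and only if for every `j ∈ M`
`Σ_{i ∈ M\{j}, q_ji(M) > 0} δ_ji(M)q_ji(M)/p(i|{i,j})
  − Σ_{i ∈ M\{j}, q_ji(M) = 0 ∧ q_ji({i,j}) = 0} δ_ij(M)q_ij(M)/p(j|{i,j}) = 0`. -/
theorem stmt17 (M : Finset X) (hM : M.Nonempty)
    (q : Finset X → X → X → ℝ) (hmsc : IsMSC M q)
    (p : Finset X → X → ℝ) (hp : IsSCF p)
    (hpair : ∀ N : Finset X, N ⊆ M → N.card = 2 → StationaryOn N (q N) (p N)) :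
    StationaryOn M (q M) (p M) ↔
      ∀ j ∈ M,
        (∑ i ∈ (M.erase j).filter (fun i => 0 < q M j i),
            delta p M j i * q M j i / p {i, j} i)
        - (∑ i ∈ (M.erase j).filter (fun i => q M j i = 0 ∧ q {i, j} j i = 0),
            delta p M i j * q M i j / p {i, j} j) = 0 := by
  classical
  have hmsc' := hmsc
  obtain ⟨hRS, hA1, hA2, hA3⟩ := hmsc
  have hrelpair : ∀ i ∈ M, ∀ j ∈ M, i ≠ j → RelMenu M ({i, j} : Finset X) := by
    intro i hi j hj hij
    refine Or.inr ⟨?_, Finset.card_pair hij⟩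
    intro x hx
    rcases Finset.mem_insert.mp hx with h | h
    · exact h ▸ hi
    · exact (Finset.mem_singleton.mp h) ▸ hj
  have key : ∀ j ∈ M,
      (∑ i ∈ M, p M i * q M i j = p M j) ↔
      ((∑ i ∈ (M.erase j).filter (fun i => 0 < q M j i),
            delta p M j i * q M j i / p {i, j} i)
        - (∑ i ∈ (M.erase j).filter (fun i => q M j i = 0 ∧ q {i, j} j i = 0),
            delta p M i j * q M i j / p {i, j} j) = 0) := by
    intro j hj
    have hrowM : ∑ l ∈ M, q M j l = 1 := (hRS M (Or.inl rfl)).2 j hj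
    have hstep1 : (∑ i ∈ M, p M i * q M i j = p M j) ↔
        (∑ i ∈ M.erase j, (p M i * q M i j - p M j * q M j i)) = 0 := by
      have h1 : ∑ i ∈ M, (p M i * q M i j - p M j * q M j i)
          = (∑ i ∈ M, p M i * q M i j) - p M j := by
        rw [Finset.sum_sub_distrib, ← Finset.mul_sum, hrowM, mul_one]
      have h2 : (∑ i ∈ M.erase j, (p M i * q M i j - p M j * q M j i))
          + (p M j * q M j j - p M j * q M j j)
          = ∑ i ∈ M, (p M i * q M i j - p M j * q M j i) :=
        Finset.sum_erase_add M _ hj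
      rw [sub_self, add_zero] at h2
      rw [h2, h1, sub_eq_zero]
    rw [hstep1]
    -- case 1: q M j i > 0
    have case1 : ∀ i ∈ (M.erase j).filter (fun i => 0 < q M j i),
        delta p M j i * q M j i / p {i, j} i
          = -(p M i * q M i j - p M j * q M j i) := by
      intro i hif
      rw [Finset.mem_filter] at hif
      obtain ⟨hie, hpos⟩ := hif
      have hi : i ∈ M := Finset.mem_of_mem_erase hie
      have hij : i ≠ j := Finset.ne_of_mem_erase hie
      obtain ⟨heq, hsum, hnn1, hnn2⟩ := pair_facts hmsc' hp hpair hi hj hij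
      have hiN : i ∈ ({i, j} : Finset X) := Finset.mem_insert_self i {j}
      have hjN : j ∈ ({i, j} : Finset X) :=
        Finset.mem_insert_of_mem (Finset.mem_singleton_self j)
      have htr : q {i, j} i j * q M j i = q {i, j} j i * q M i j :=
        hA3 M (Or.inl rfl) i hi j hj hij
      have hbnn : 0 ≤ q {i, j} j i := (hRS _ (hrelpair i hi j hj hij)).1 j hjN i hiN
      have hb : 0 < q {i, j} j i := by
        rcases hbnn.lt_or_eq with h | h
        · exact h
        · exfalso
          have ha : 0 < q {i, j} i j := by
            have h2 := hA2 j hj i hi hij.symm (by rw [Finset.pair_comm]; exact h.symm)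
            rwa [Finset.pair_comm j i] at h2
          have h3 : q {i, j} i j * q M j i = 0 := by rw [htr, ← h, zero_mul]
          rcases mul_eq_zero.mp h3 with h' | h'
          · exact ha.ne' h'
          · exact hpos.ne' h'
      have hpi : 0 < p {i, j} i := by
        rcases hnn1.lt_or_eq with h | h
        · exact h
        · exfalso
          have hpj1 : p {i, j} j = 1 := by linarith
          rw [← h, zero_mul, hpj1, one_mul] at heq
          exact hb.ne' heq.symm
      have h5 : p {i, j} i * q M i j = p {i, j} j * q M j i := by
        have hx : q {i, j} j i * (p {i, j} i * q M i j)
            = q {i, j} j i * (p {i, j} j * q M j i) := by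
          linear_combination q M j i * heq - p {i, j} i * htr
        exact mul_left_cancel₀ hb.ne' hx
      simp only [delta, Finset.pair_comm j i]
      rw [div_eq_iff hpi.ne']
      linear_combination p M i * h5
    -- case 2: q M j i = 0 and q {i,j} j i = 0
    have case2 : ∀ i ∈ (M.erase j).filter (fun i => q M j i = 0 ∧ q {i, j} j i = 0),
        delta p M i j * q M i j / p {i, j} j
          = p M i * q M i j - p M j * q M j i := by
      intro i hif
      rw [Finset.mem_filter] at hif
      obtain ⟨hie, hq0, hb0⟩ := hif
      have hi : i ∈ M := Finset.mem_of_mem_erase hie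
      have hij : i ≠ j := Finset.ne_of_mem_erase hie
      obtain ⟨heq, hsum, hnn1, hnn2⟩ := pair_facts hmsc' hp hpair hi hj hij
      have ha : 0 < q {i, j} i j := by
        have h2 := hA2 j hj i hi hij.symm (by rw [Finset.pair_comm]; exact hb0)
        rwa [Finset.pair_comm j i] at h2
      have hpi0 : p {i, j} i = 0 := by
        rw [hb0, mul_zero] at heq
        rcases mul_eq_zero.mp heq with h | h
        · exact h
        · exact absurd h ha.ne'
      have hpj1 : p {i, j} j = 1 := by linarith
      simp only [delta, hpi0, hpj1, hq0]
      ring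
    -- case 3: q M j i = 0 and q {i,j} j i ≠ 0 gives a vanishing term
    have case3 : ∀ i ∈ ((M.erase j).filter (fun i => ¬ 0 < q M j i)).filter
          (fun i => ¬ q {i, j} j i = 0),
        (p M i * q M i j - p M j * q M j i) = 0 := by
      intro i hif
      rw [Finset.mem_filter, Finset.mem_filter] at hif
      obtain ⟨⟨hie, hnpos⟩, hbne⟩ := hif
      have hi : i ∈ M := Finset.mem_of_mem_erase hie
      have hij : i ≠ j := Finset.ne_of_mem_erase hie
      have hiN : i ∈ ({i, j} : Finset X) := Finset.mem_insert_self i {j}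
      have hjN : j ∈ ({i, j} : Finset X) :=
        Finset.mem_insert_of_mem (Finset.mem_singleton_self j)
      have hqnn : 0 ≤ q M j i := (hRS M (Or.inl rfl)).1 j hj i hi
      have hq0 : q M j i = 0 := le_antisymm (not_lt.mp hnpos) hqnn
      have hbnn : 0 ≤ q {i, j} j i := (hRS _ (hrelpair i hi j hj hij)).1 j hjN i hiN
      have hb : 0 < q {i, j} j i := lt_of_le_of_ne hbnn (Ne.symm hbne)
      have htr : q {i, j} i j * q M j i = q {i, j} j i * q M i j :=
        hA3 M (Or.inl rfl) i hi j hj hij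
      have hqij0 : q M i j = 0 := by
        rw [hq0, mul_zero] at htr
        rcases mul_eq_zero.mp htr.symm with h | h
        · exact absurd h hb.ne'
        · exact h
      rw [hq0, hqij0]
      ring
    -- assemble
    have hsplit1 := Finset.sum_filter_add_sum_filter_not (M.erase j)
      (fun i => 0 < q M j i) (fun i => p M i * q M i j - p M j * q M j i)
    have hsplit2 := Finset.sum_filter_add_sum_filter_not
      ((M.erase j).filter (fun i => ¬ 0 < q M j i))
      (fun i => q {i, j} j i = 0) (fun i => p M i * q M i j - p M j * q M j i)
    have hzero : ∑ i ∈ ((M.erase j).filter (fun i => ¬ 0 < q M j i)).filter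
          (fun i => ¬ q {i, j} j i = 0),
        (p M i * q M i j - p M j * q M j i) = 0 := Finset.sum_eq_zero case3
    have hset : ((M.erase j).filter (fun i => ¬ 0 < q M j i)).filter
          (fun i => q {i, j} j i = 0)
        = (M.erase j).filter (fun i => q M j i = 0 ∧ q {i, j} j i = 0) := by
      rw [Finset.filter_filter]
      apply Finset.filter_congr
      intro i hi'
      have hqnn : 0 ≤ q M j i := (hRS M (Or.inl rfl)).1 j hj i (Finset.mem_of_mem_erase hi')
      constructor
      · rintro ⟨h1, h2⟩
        exact ⟨le_antisymm (not_lt.mp h1) hqnn, h2⟩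
      · rintro ⟨h1, h2⟩
        exact ⟨by rw [h1]; exact lt_irrefl 0, h2⟩
    have h6 : ∑ i ∈ (M.erase j).filter (fun i => ¬ 0 < q M j i),
          (p M i * q M i j - p M j * q M j i)
        = ∑ i ∈ (M.erase j).filter (fun i => q M j i = 0 ∧ q {i, j} j i = 0),
          (p M i * q M i j - p M j * q M j i) := by
      rw [← hsplit2, hzero, add_zero, hset]
    have hTE : ∑ i ∈ M.erase j, (p M i * q M i j - p M j * q M j i)
        = (∑ i ∈ (M.erase j).filter (fun i => 0 < q M j i),
            (p M i * q M i j - p M j * q M j i))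
          + ∑ i ∈ (M.erase j).filter (fun i => q M j i = 0 ∧ q {i, j} j i = 0),
            (p M i * q M i j - p M j * q M j i) := by
      rw [← hsplit1, h6]
    have hS1 : ∑ i ∈ (M.erase j).filter (fun i => 0 < q M j i),
          delta p M j i * q M j i / p {i, j} i
        = -(∑ i ∈ (M.erase j).filter (fun i => 0 < q M j i),
            (p M i * q M i j - p M j * q M j i)) := by
      rw [← Finset.sum_neg_distrib]
      exact Finset.sum_congr rfl case1
    have hS2 : ∑ i ∈ (M.erase j).filter (fun i => q M j i = 0 ∧ q {i, j} j i = 0),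
          delta p M i j * q M i j / p {i, j} j
        = ∑ i ∈ (M.erase j).filter (fun i => q M j i = 0 ∧ q {i, j} j i = 0),
          (p M i * q M i j - p M j * q M j i) :=
      Finset.sum_congr rfl case2
    rw [hS1, hS2, hTE]
    constructor <;> intro h <;> linarith
  constructor
  · intro h j hj
    exact (key j hj).mp (h j hj)
  · intro h j hj
    exact (key j hj).mpr (h j hj)
end

section
/- Let X = {i, j, k} be a three-element set and consider an MSC model on the menu X with matrices Q(X), Q({i,j}), Q({i,k}), Q({j,k}) whose off-diagonal entries are all strictly positive except q_ik({i,k}) = 0 and q_ik(X) = 0 (alternative k is a decoy asymmetrically dominated by the target i). Let λ(·|N) denote the unique stationary distribution of Q(N) for N = X and N = {i,j}. Then λ(i|X)·λ(j|{i,j}) > λ(j|X)·λ(i|{i,j}), i.e. the relative choice frequency of the target i versus the competitor j is strictly higher in the presence of the decoy (the attraction effect in relative terms). -/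
open Finset

variable {X : Type*} [DecidableEq X]

/-!
The target `i` loses probability mass only to `j`, since `q_ik(X) = 0`, but it gains mass
from both `j` and the decoy `k`. Balancing the flow through `i` in the stationary
distribution of `Q(X)` therefore gives `λ(i|X) q_ij(X) > λ(j|X) q_ji(X)`, the decoy having
positive weight because the chain reaches it. On the pair, detailed balance gives
`λ(i|{i,j}) / λ(j|{i,j}) = q_ji({i,j}) / q_ij({i,j})`, and TR-IIA says this ratio equals
`q_ji(X) / q_ij(X)`, which is strictly below `λ(i|X) / λ(j|X)`.
-/

lemma RelMenu.pair {M : Finset X} {i j : X} (hi : i ∈ M) (hj : j ∈ M) (hij : i ≠ j) :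
    RelMenu M {i, j} :=
  Or.inr ⟨insert_subset hi (singleton_subset_iff.mpr hj), card_pair hij⟩

namespace StationaryOn

variable {α : Type*} {N : Finset α} {Q : α → α → ℝ} {σ : α → ℝ}

lemma eq_zero_of_eq_zero_of_pos (hst : StationaryOn N Q σ)
    (hQ : ∀ a ∈ N, ∀ b ∈ N, 0 ≤ Q a b) (hσ : ∀ a, 0 ≤ σ a) {a b : α} (ha : a ∈ N)
    (hb : b ∈ N) (hab : 0 < Q a b) (hσb : σ b = 0) : σ a = 0 := by
  have hle : σ a * Q a b ≤ σ b :=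
    hst b hb ▸ single_le_sum (fun c hc => mul_nonneg (hσ c) (hQ c hc b hb)) ha
  exact le_antisymm (nonpos_of_mul_nonpos_left (hσb ▸ hle) hab) (hσ a)

/-- Global balance at `i`. -/
lemma mul_sum_erase_eq [DecidableEq α] (hst : StationaryOn N Q σ) {i : α} (hi : i ∈ N)
    (hrow : ∑ b ∈ N, Q i b = 1) :
    σ i * ∑ b ∈ N.erase i, Q i b = ∑ a ∈ N.erase i, σ a * Q a i := by
  have hout : ∑ b ∈ N.erase i, Q i b = 1 - Q i i := by
    rw [← hrow, ← add_sum_erase N _ hi, add_sub_cancel_left]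
  have hin := hst i hi
  rw [← add_sum_erase N _ hi] at hin
  rw [hout]
  linarith

lemma mul_eq_mul_of_pair_s18 [DecidableEq α] {i j : α} (hij : i ≠ j)
    (hst : StationaryOn {i, j} Q σ) (hrow : Q i i + Q i j = 1) :
    σ i * Q i j = σ j * Q j i := by
  have h := hst.mul_sum_erase_eq (mem_insert_self i {j}) (by rwa [sum_pair hij])
  rwa [erase_insert_eq_erase, erase_eq_of_notMem (notMem_singleton.mpr hij), sum_singleton,
    sum_singleton] at h

lemma mul_eq_add_of_triple [DecidableEq α] {i j k : α} (hij : i ≠ j) (hik : i ≠ k)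
    (hjk : j ≠ k) (hst : StationaryOn {i, j, k} Q σ) (hrow : ∑ b ∈ {i, j, k}, Q i b = 1)
    (hQik : Q i k = 0) :
    σ i * Q i j = σ j * Q j i + σ k * Q k i := by
  have h := hst.mul_sum_erase_eq (mem_insert_self i _) hrow
  have herase : ({i, j, k} : Finset α).erase i = {j, k} := by
    rw [erase_insert_eq_erase, erase_eq_of_notMem (by simp [hij, hik])]
  rwa [herase, sum_pair hjk, sum_pair hjk, hQik, add_zero] at h

end StationaryOn

lemma mul_lt_mul_of_ratio_transfer {l₁ l₂ p₁ p₂ a b c d : ℝ} (hkey : l₂ * b < l₁ * a)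
    (htr : c * b = d * a) (hpair : p₁ * c = p₂ * d) (hb : 0 < b) (hd : 0 < d)
    (hp₁ : 0 < p₁) :
    l₂ * p₁ < l₁ * p₂ := by
  have hcd : l₂ * d < l₁ * c := by
    refine lt_of_mul_lt_mul_right ?_ hb.le
    calc l₂ * d * b = l₂ * b * d := by ring
      _ < l₁ * a * d := mul_lt_mul_of_pos_right hkey hd
      _ = l₁ * c * b := by rw [mul_assoc, mul_comm a, ← htr, mul_assoc]
  refine lt_of_mul_lt_mul_right ?_ hd.le
  calc l₂ * p₁ * d = l₂ * d * p₁ := by ring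
    _ < l₁ * c * p₁ := mul_lt_mul_of_pos_right hcd hp₁
    _ = l₁ * p₂ * d := by rw [mul_assoc, mul_comm c, hpair, mul_assoc]

theorem stmt18_general (i j k : X) (hij : i ≠ j) (hik : i ≠ k) (hjk : j ≠ k)
    (q : Finset X → X → X → ℝ) (hmsc : IsMSC {i, j, k} q)
    (hpos : ∀ N, RelMenu ({i, j, k} : Finset X) N → ∀ a ∈ N, ∀ b ∈ N, a ≠ b →
      ¬(a = i ∧ b = k) → 0 < q N a b)
    (hikM : q ({i, j, k} : Finset X) i k = 0)
    (lam : Finset X → X → ℝ)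
    (hlam : ∀ N : Finset X, N = ({i, j, k} : Finset X) ∨ N = ({i, j} : Finset X) →
      (∀ a, 0 ≤ lam N a) ∧ (∀ a, a ∉ N → lam N a = 0) ∧ (∑ a ∈ N, lam N a = 1) ∧
      StationaryOn N (q N) (lam N)) :
    lam {i, j, k} i * lam {i, j} j > lam {i, j, k} j * lam {i, j} i := by
  obtain ⟨hstoch, -, -, htr⟩ := hmsc
  have hM : RelMenu ({i, j, k} : Finset X) {i, j, k} := Or.inl rfl
  have hP : RelMenu ({i, j, k} : Finset X) {i, j} := RelMenu.pair (by simp) (by simp) hij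
  obtain ⟨hl0, -, hl1, hlst⟩ := hlam {i, j, k} (Or.inl rfl)
  obtain ⟨hp0, -, hp1, hpst⟩ := hlam {i, j} (Or.inr rfl)
  have qMij := hpos _ hM i (by simp) j (by simp) hij (by simp [hjk])
  have qMji := hpos _ hM j (by simp) i (by simp) hij.symm (by simp [hij.symm])
  have qMjk := hpos _ hM j (by simp) k (by simp) hjk (by simp [hij.symm])
  have qMki := hpos _ hM k (by simp) i (by simp) hik.symm (by simp [hik.symm])
  have qPji := hpos _ hP j (by simp) i (by simp) hij.symm (by simp [hij.symm])
  have hlk : 0 < lam {i, j, k} k := by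
    refine (hl0 k).lt_of_ne' fun hk => ?_
    have hj := hlst.eq_zero_of_eq_zero_of_pos (hstoch _ hM).1 hl0 (by simp) (by simp) qMjk hk
    have hi := hlst.eq_zero_of_eq_zero_of_pos (hstoch _ hM).1 hl0 (by simp) (by simp) qMij hj
    rw [sum_insert (by simp [hij, hik]), sum_pair hjk, hi, hj, hk] at hl1
    norm_num at hl1
  have hpi : 0 < lam {i, j} i := by
    refine (hp0 i).lt_of_ne' fun hi => ?_
    have hj := hpst.eq_zero_of_eq_zero_of_pos (hstoch _ hP).1 hp0 (by simp) (by simp) qPji hi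
    rw [sum_pair hij, hi, hj] at hp1
    norm_num at hp1
  have hflow := hlst.mul_eq_add_of_triple hij hik hjk ((hstoch _ hM).2 i (by simp)) hikM
  have hpair := hpst.mul_eq_mul_of_pair_s18 hij
    (by simpa [sum_pair hij] using (hstoch _ hP).2 i (by simp))
  exact mul_lt_mul_of_ratio_transfer (by linarith [mul_pos hlk qMki])
    (htr _ hM i (by simp) j (by simp) hij) hpair qMji qPji hpi

/-- The attraction effect in relative terms: in an MSC model on `{i, j, k}` with all
off-diagonal transition probabilities strictly positive except that the decoy comparison
`q_ik({i,k}) = q_ik({i,j,k}) = 0`, the stationary distributions satisfy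
`λ(i|{i,j,k})·λ(j|{i,j}) > λ(j|{i,j,k})·λ(i|{i,j})`. -/
theorem stmt18 (i j k : X) (hij : i ≠ j) (hik : i ≠ k) (hjk : j ≠ k)
    (q : Finset X → X → X → ℝ) (hmsc : IsMSC {i, j, k} q)
    (hpos : ∀ N, RelMenu ({i, j, k} : Finset X) N → ∀ a ∈ N, ∀ b ∈ N, a ≠ b →
      ¬(a = i ∧ b = k) → 0 < q N a b)
    (hik2 : q {i, k} i k = 0) (hikM : q ({i, j, k} : Finset X) i k = 0)
    (lam : Finset X → X → ℝ)
    (hlam : ∀ N : Finset X, N = ({i, j, k} : Finset X) ∨ N = ({i, j} : Finset X) →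
      (∀ a, 0 ≤ lam N a) ∧ (∀ a, a ∉ N → lam N a = 0) ∧ (∑ a ∈ N, lam N a = 1) ∧
      StationaryOn N (q N) (lam N)) :
    lam {i, j, k} i * lam {i, j} j > lam {i, j, k} j * lam {i, j} i :=
  stmt18_general i j k hij hik hjk q hmsc hpos hikM lam hlam
end

section
/- Let X = {i, j, k} be a three-element set and consider an MSC model on the menu X with matrices Q(X), Q({i,j}), Q({i,k}), Q({j,k}) whose off-diagonal entries are all strictly positive except q_ik({i,k}) = 0 and q_ik(X) = 0 (alternative k is a decoy asymmetrically dominated by the target i). Let λ(·|N) denote the unique stationary distribution of Q(N) for N = X and N = {i,j}. Then λ(i|X) > λ(i|{i,j}) if and only if q_ki(X) > q_ji(X), i.e. the target is chosen more frequently from the triple than from the pair in absolute terms exactly when the transition to the target is more likely from the decoy than from the competitor. -/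
open Finset

variable {X : Type*} [DecidableEq X]

/-- The attraction effect in absolute terms: in an MSC model on `{i, j, k}` with all
off-diagonal transition probabilities strictly positive except that the decoy comparison
`q_ik({i,k}) = q_ik({i,j,k}) = 0`, the target is chosen more often from the triple than
from the pair, `λ(i|{i,j,k}) > λ(i|{i,j})`, if and only if `q_ki({i,j,k}) > q_ji({i,j,k})`. -/
theorem stmt19 (i j k : X) (hij : i ≠ j) (hik : i ≠ k) (hjk : j ≠ k)
    (q : Finset X → X → X → ℝ) (hmsc : IsMSC {i, j, k} q)
    (hpos : ∀ N, RelMenu ({i, j, k} : Finset X) N → ∀ a ∈ N, ∀ b ∈ N, a ≠ b →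
      ¬(a = i ∧ b = k) → 0 < q N a b)
    (hik2 : q {i, k} i k = 0) (hikM : q ({i, j, k} : Finset X) i k = 0)
    (lam : Finset X → X → ℝ)
    (hlam : ∀ N : Finset X, N = ({i, j, k} : Finset X) ∨ N = ({i, j} : Finset X) →
      (∀ a, 0 ≤ lam N a) ∧ (∀ a, a ∉ N → lam N a = 0) ∧ (∑ a ∈ N, lam N a = 1) ∧
      StationaryOn N (q N) (lam N)) :
    lam {i, j, k} i > lam {i, j} i ↔
      q ({i, j, k} : Finset X) k i > q ({i, j, k} : Finset X) j i := by

  obtain ⟨hrow, hA1, hA2, hA3⟩ := hmsc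
  have hiM : i ∈ ({i, j, k} : Finset X) := by simp
  have hjM : j ∈ ({i, j, k} : Finset X) := by simp
  have hkM : k ∈ ({i, j, k} : Finset X) := by simp
  have hi2 : i ∈ ({i, j} : Finset X) := by simp
  have hj2 : j ∈ ({i, j} : Finset X) := by simp
  have hrelM : RelMenu ({i, j, k} : Finset X) ({i, j, k} : Finset X) := Or.inl rfl
  have hrel2 : RelMenu ({i, j, k} : Finset X) ({i, j} : Finset X) := by
    refine Or.inr ⟨?_, ?_⟩
    · intro x hx; simp at hx ⊢; tauto
    · rw [Finset.card_insert_of_notMem (by simp [hij]), Finset.card_singleton]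
  set x := lam {i, j, k} i with hx
  set y := lam {i, j, k} j with hy
  set z := lam {i, j, k} k with hzdef
  set u := lam {i, j} i with hu
  set v := lam {i, j} j with hv
  set b := q ({i, j, k} : Finset X) i j with hb
  set c := q ({i, j, k} : Finset X) j i with hc
  set d := q ({i, j, k} : Finset X) j k with hd
  set e := q ({i, j, k} : Finset X) k i with he
  set f := q ({i, j, k} : Finset X) k j with hf
  have hbpos : 0 < b := hpos _ hrelM i hiM j hjM hij (by simp [hjk])
  have hcpos : 0 < c := hpos _ hrelM j hjM i hiM hij.symm (by simp [hij.symm])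
  have hdpos : 0 < d := hpos _ hrelM j hjM k hkM hjk (by simp [hij.symm])
  have hepos : 0 < e := hpos _ hrelM k hkM i hiM hik.symm (by simp [hik.symm])
  have hfpos : 0 < f := hpos _ hrelM k hkM j hjM (fun h => hjk h.symm) (by simp [hik.symm])
  have hb2pos : 0 < q {i, j} i j := hpos _ hrel2 i hi2 j hj2 hij (by simp [hjk])
  have hc2pos : 0 < q {i, j} j i := hpos _ hrel2 j hj2 i hi2 hij.symm (by simp [hij.symm])
  obtain ⟨hMnn, hMout, hMsum, hMstat⟩ := hlam _ (Or.inl rfl)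
  obtain ⟨h2nn, h2out, h2sum, h2stat⟩ := hlam ({i, j} : Finset X) (Or.inr rfl)
  -- expand sums over {i,j,k}
  have expand : ∀ g : X → ℝ, ∑ a ∈ ({i, j, k} : Finset X), g a = g i + g j + g k := by
    intro g
    rw [show ({i, j, k} : Finset X) = insert i (insert j {k}) from rfl,
      Finset.sum_insert (by simp [hij, hik]), Finset.sum_insert (by simp [hjk]),
      Finset.sum_singleton]
    ring
  have expand2 : ∀ g : X → ℝ, ∑ a ∈ ({i, j} : Finset X), g a = g i + g j := by
    intro g
    rw [show ({i, j} : Finset X) = insert i {j} from rfl,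
      Finset.sum_insert (by simp [hij]), Finset.sum_singleton]
  -- row sums
  have rowM := (hrow _ hrelM).2
  have row2 := (hrow _ hrel2).2
  have rowi : q ({i, j, k} : Finset X) i i = 1 - b := by
    have := rowM i hiM; rw [expand] at this
    rw [hikM] at this; linarith
  have rowk : q ({i, j, k} : Finset X) k k = 1 - e - f := by
    have := rowM k hkM; rw [expand] at this; linarith
  have row2i : q ({i, j} : Finset X) i i = 1 - q ({i, j} : Finset X) i j := by
    have := row2 i hi2; rw [expand2] at this; linarith
  -- stationarity equations
  have hsum : x + y + z = 1 := by rw [expand] at hMsum; exact hMsum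
  have huv : u + v = 1 := by rw [expand2] at h2sum; exact h2sum
  have E1 : x * b = y * c + z * e := by
    have := hMstat i hiM; rw [expand] at this
    rw [rowi] at this; ring_nf at this ⊢; linarith
  have E3 : y * d = z * (e + f) := by
    have := hMstat k hkM; rw [expand] at this
    rw [rowk, hikM] at this; ring_nf at this ⊢; linarith
  have Epair : u * q ({i, j} : Finset X) i j = v * q ({i, j} : Finset X) j i := by
    have := h2stat i hi2; rw [expand2] at this
    rw [row2i] at this; ring_nf at this ⊢; linarith
  have hTR : q ({i, j} : Finset X) i j * c = q ({i, j} : Finset X) j i * b :=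
    hA3 _ hrelM i hiM j hjM hij
  have ubvc : u * b = v * c := by
    have key : q ({i, j} : Finset X) j i * (u * b) = q ({i, j} : Finset X) j i * (v * c) := by
      linear_combination c * Epair - u * hTR
    exact mul_left_cancel₀ (ne_of_gt hc2pos) key
  have huval : u * (b + c) = c := by linear_combination ubvc + c * huv
  have hznn : 0 ≤ z := hMnn k
  have hzpos : 0 < z := by
    rcases lt_or_eq_of_le hznn with h | h
    · exact h
    · exfalso
      have hy0 : y = 0 := by
        have : y * d = 0 := by rw [E3, ← h]; ring
        rcases mul_eq_zero.mp this with h' | h'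
        · exact h'
        · exact absurd h' (ne_of_gt hdpos)
      have hx0 : x = 0 := by
        have : x * b = 0 := by rw [E1, hy0, ← h]; ring
        rcases mul_eq_zero.mp this with h' | h'
        · exact h'
        · exact absurd h' (ne_of_gt hbpos)
      rw [hx0, hy0, ← h] at hsum; norm_num at hsum
  have hbc : 0 < b + c := by linarith
  have iden : z * (e - c) = x * (b + c) - c := by
    linear_combination -E1 - c * hsum
  constructor
  · intro h
    have hxc : c < x * (b + c) := by
      calc c = u * (b + c) := huval.symm
        _ < x * (b + c) := by exact mul_lt_mul_of_pos_right h hbc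
    nlinarith [iden, hzpos]
  · intro h
    have : z * (e - c) > 0 := mul_pos hzpos (by linarith)
    have hxc : u * (b + c) < x * (b + c) := by rw [huval]; linarith
    exact lt_of_mul_lt_mul_right hxc hbc.le
end
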